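/- Let H = λ e₁e₁^T with λ > 0, and H_i = m·e₁e₁^T for i ∈ [σ] and H_i = 0 for i ∈ [n]∖[σ], where m = λn/σ. Let x_1,…,x_n be i.i.d. Bernoulli(B/n) and Ĵ = I − η·H_t·(I + (ρ/α)H) with H_t = (1/B)Σ_i x_i H_i. Then e₁^T E[Ĵ^T Ĵ] e₁ ≤ 1 if and only if η·λ·(1 + (ρ/α)λ)·(σ + n/B − 1) ≤ 2σ. -/

import Mathlib

open Matrix Finset

lemma sum_pi_bool {n : ℕ} (w : Fin n → Bool → ℝ) :
    ∑ x : Fin n → Bool, ∏ i, w i (x i) = ∏ i, (w i false + w i true) := by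
  rw [← Fintype.piFinset_univ, Finset.sum_prod_piFinset]
  simp [add_comm]

noncomputable def Pw {n : ℕ} (p : ℝ) (x : Fin n → Bool) : ℝ := ∏ j, if x j then p else 1 - p
def chi {n : ℕ} (i : Fin n) (x : Fin n → Bool) : ℝ := if x i then 1 else 0

lemma hchi {n : ℕ} (i : Fin n) (x : Fin n → Bool) :
    chi i x = ∏ j, (if j = i then (if x j then (1:ℝ) else 0) else 1) := by
  simp [chi, Finset.prod_ite_eq']

lemma sumPw {n : ℕ} (p : ℝ) : ∑ x : Fin n → Bool, Pw p x = 1 := by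
  unfold Pw
  rw [sum_pi_bool (fun j b => if b then p else 1 - p)]
  simp

lemma sumPwchi {n : ℕ} (p : ℝ) (i : Fin n) : ∑ x : Fin n → Bool, Pw p x * chi i x = p := by
  have h1 : ∀ x : Fin n → Bool, Pw p x * chi i x
      = ∏ j, ((if x j then p else 1 - p) * (if j = i then (if x j then (1:ℝ) else 0) else 1)) := by
    intro x
    unfold Pw
    rw [hchi, ← Finset.prod_mul_distrib]
  simp_rw [h1]
  rw [sum_pi_bool (fun j b => (if b then p else 1 - p) * (if j = i then (if b then (1:ℝ) else 0) else 1))]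
  have h2 : ∀ j ∈ (univ : Finset (Fin n)),
      (((if false = true then p else 1 - p) * if j = i then if false = true then (1:ℝ) else 0 else 1) +
        (if true = true then p else 1 - p) * if j = i then if true = true then (1:ℝ) else 0 else 1)
      = if j = i then p else 1 := by
    intro j _; by_cases hj : j = i <;> simp [hj]
  rw [Finset.prod_congr rfl h2]
  simp [Finset.prod_ite_eq']

lemma sumPwchichi {n : ℕ} (p : ℝ) {i i' : Fin n} (hii : i ≠ i') :
    ∑ x : Fin n → Bool, Pw p x * (chi i x * chi i' x) = p ^ 2 := by
  have h1 : ∀ x : Fin n → Bool, Pw p x * (chi i x * chi i' x)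
      = ∏ j, ((if x j then p else 1 - p) * ((if j = i then (if x j then (1:ℝ) else 0) else 1)
          * (if j = i' then (if x j then (1:ℝ) else 0) else 1))) := by
    intro x
    unfold Pw
    rw [hchi i, hchi i', ← Finset.prod_mul_distrib, ← Finset.prod_mul_distrib]
  simp_rw [h1]
  rw [sum_pi_bool (fun j b => (if b then p else 1 - p) * ((if j = i then (if b then (1:ℝ) else 0) else 1) * (if j = i' then (if b then (1:ℝ) else 0) else 1)))]
  have h2 : ∀ j ∈ (univ : Finset (Fin n)),
      (((if false = true then p else 1 - p) * ((if j = i then if false = true then (1:ℝ) else 0 else 1) * if j = i' then if false = true then (1:ℝ) else 0 else 1)) +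
        (if true = true then p else 1 - p) * ((if j = i then if true = true then (1:ℝ) else 0 else 1) * if j = i' then if true = true then (1:ℝ) else 0 else 1))
      = (if j = i then p else 1) * (if j = i' then p else 1) := by
    intro j _
    by_cases hj : j = i
    · by_cases hj' : j = i'
      · exact absurd (hj.symm.trans hj') hii
      · simp [hj, hj', hii]
    · by_cases hj' : j = i'
      · simp [hj, hj', Ne.symm hii]
      · simp [hj, hj']
  rw [Finset.prod_congr rfl h2, Finset.prod_mul_distrib]
  simp only [Finset.prod_ite_eq', Finset.mem_univ, if_true]
  ring

lemma chi_sq {n : ℕ} (i : Fin n) (x : Fin n → Bool) : chi i x * chi i x = chi i x := by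
  unfold chi; split_ifs <;> ring

lemma key {n : ℕ} (p t : ℝ) (s : Finset (Fin n)) :
    ∑ x : Fin n → Bool, Pw p x * (1 - t * ∑ i ∈ s, chi i x) ^ 2
      = 1 - 2 * t * (s.card : ℝ) * p
        + t ^ 2 * ((s.card : ℝ) * p + (s.card : ℝ) * ((s.card : ℝ) - 1) * p ^ 2) := by
  have expand : ∀ x : Fin n → Bool, Pw p x * (1 - t * ∑ i ∈ s, chi i x) ^ 2
      = Pw p x - 2 * t * (∑ i ∈ s, Pw p x * chi i x)
        + t ^ 2 * (∑ i ∈ s, ∑ j ∈ s, Pw p x * (chi i x * chi j x)) := by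
    intro x
    simp_rw [← Finset.mul_sum]
    rw [← Finset.sum_mul]
    ring
  simp_rw [expand]
  rw [Finset.sum_add_distrib, Finset.sum_sub_distrib, sumPw, ← Finset.mul_sum, ← Finset.mul_sum]
  rw [Finset.sum_comm]
  have hS1 : ∑ i ∈ s, ∑ x : Fin n → Bool, Pw p x * chi i x = (s.card : ℝ) * p := by
    simp [sumPwchi, mul_comm]
  rw [hS1]
  have hS2 : ∑ x : Fin n → Bool, ∑ i ∈ s, ∑ j ∈ s, Pw p x * (chi i x * chi j x)
      = (s.card : ℝ) * p + (s.card : ℝ) * ((s.card : ℝ) - 1) * p ^ 2 := by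
    rw [Finset.sum_comm]
    have h1 : ∀ i ∈ s, ∑ x : Fin n → Bool, ∑ j ∈ s, Pw p x * (chi i x * chi j x)
        = (s.card : ℝ) * p ^ 2 + (p - p ^ 2) := by
      intro i hi
      rw [Finset.sum_comm]
      have h2 : ∀ j ∈ s, ∑ x : Fin n → Bool, Pw p x * (chi i x * chi j x)
          = if i = j then p else p ^ 2 := by
        intro j _
        by_cases hij : i = j
        · subst hij
          simp_rw [chi_sq]
          simp [sumPwchi]
        · simp [sumPwchichi p hij, hij]
      rw [Finset.sum_congr rfl h2]
      have h3 : ∀ j ∈ s, (if i = j then p else p ^ 2) = p ^ 2 + (if i = j then p - p ^ 2 else 0) := by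
        intro j _; split_ifs <;> ring
      rw [Finset.sum_congr rfl h3, Finset.sum_add_distrib, Finset.sum_const, Finset.sum_ite_eq,
        if_pos hi]
      simp [mul_comm]
    rw [Finset.sum_congr rfl h1, Finset.sum_const]
    have : ((s.card : ℝ)) • ((s.card : ℝ) * p ^ 2 + (p - p ^ 2)) = (s.card:ℝ) * ((s.card:ℝ)*p^2 + (p - p^2)) := by
      simp
    push_cast
    ring
  rw [hS2]
  ring

lemma card_filter_lt {n σ : ℕ} (hσn : σ ≤ n) :
    (Finset.univ.filter (fun i : Fin n => (i : ℕ) < σ)).card = σ := by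
  have : Finset.univ.filter (fun i : Fin n => (i : ℕ) < σ)
      = Finset.map (Fin.castLEEmb hσn) Finset.univ := by
    ext j
    simp only [Finset.mem_filter, Finset.mem_univ, true_and, Finset.mem_map, Fin.castLEEmb]
    constructor
    · intro h; exact ⟨⟨(j : ℕ), h⟩, by simp [Fin.castLE, Fin.ext_iff]⟩
    · rintro ⟨a, rfl⟩
      simpa using a.isLt
  rw [this, Finset.card_map, Finset.card_univ, Fintype.card_fin]

/-- Rank-one construction: e₁ᵀ E[ĴᵀĴ] e₁ ≤ 1 iff ηλ(1+(ρ/α)λ)(σ + n/B − 1) ≤ 2σ. -/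
theorem rank_one_sam_stability_iff {d n : ℕ} (σ b : ℕ)
    (hσ1 : 1 ≤ σ) (hσn : σ ≤ n) (hb1 : 1 ≤ b) (hbn : b ≤ n)
    (lam η ρ α : ℝ) (hlam : 0 < lam) (hη : 0 < η) (hρ : 0 < ρ) (hα : 0 < α) :
    let E1 : Matrix (Fin (d + 1)) (Fin (d + 1)) ℝ := Matrix.single 0 0 1
    let m : ℝ := lam * n / σ
    let Hi : Fin n → Matrix (Fin (d + 1)) (Fin (d + 1)) ℝ :=
      fun i => if (i : ℕ) < σ then m • E1 else 0
    let Hbar : Matrix (Fin (d + 1)) (Fin (d + 1)) ℝ := lam • E1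
    let Ht : (Fin n → Bool) → Matrix (Fin (d + 1)) (Fin (d + 1)) ℝ :=
      fun x => (b : ℝ)⁻¹ • ∑ i, if x i then Hi i else 0
    let J : (Fin n → Bool) → Matrix (Fin (d + 1)) (Fin (d + 1)) ℝ :=
      fun x => 1 - η • (Ht x * (1 + (ρ / α) • Hbar))
    ((∑ x : Fin n → Bool,
        (∏ i, if x i then (b : ℝ) / n else 1 - (b : ℝ) / n) • ((J x)ᵀ * J x)) 0 0 ≤ 1 ↔
      η * lam * (1 + ρ / α * lam) * ((σ : ℝ) + (n : ℝ) / b - 1) ≤ 2 * σ) := by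
  intro E1 m Hi Hbar Ht J
  have hn1 : 1 ≤ n := le_trans hσ1 hσn
  have hn0 : (0:ℝ) < n := by exact_mod_cast hn1
  have hb0 : (0:ℝ) < b := by exact_mod_cast hb1
  have hσ0 : (0:ℝ) < σ := by exact_mod_cast hσ1
  set s : Finset (Fin n) := Finset.univ.filter (fun i : Fin n => (i : ℕ) < σ) with hs
  set p : ℝ := (b : ℝ) / n with hp
  set t : ℝ := η * (1 + ρ / α * lam) * (m / b) with ht
  -- J x = 1 - (t * K x) • E1
  have hJ : ∀ x : Fin n → Bool, J x = 1 - (t * ∑ i ∈ s, chi i x) • E1 := by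
    intro x
    have hsum : (∑ i, if x i then Hi i else 0) = ((∑ i ∈ s, chi i x) * m) • E1 := by
      have h0 : ∀ i : Fin n, (if x i then Hi i else 0)
          = (if (i : ℕ) < σ then chi i x * m else 0) • E1 := by
        intro i
        simp only [Hi, chi]
        by_cases hxi : x i <;> by_cases hiσ : (i : ℕ) < σ <;>
          simp [hxi, hiσ, smul_smul]
      rw [Finset.sum_congr rfl (fun i _ => h0 i), ← Finset.sum_smul, ← Finset.sum_filter,
        ← hs, ← Finset.sum_mul]
    have hE : E1 * (1 + (ρ / α) • Hbar) = (1 + ρ / α * lam) • E1 := by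
      simp only [Hbar, mul_add, mul_one, smul_smul, Matrix.mul_smul]
      rw [show E1 * E1 = E1 by simp [E1, Matrix.single_mul_single_same]]
      rw [add_smul, one_smul]
    show (1 : Matrix (Fin (d+1)) (Fin (d+1)) ℝ) - η • (Ht x * (1 + (ρ / α) • Hbar)) = _
    have : Ht x * (1 + (ρ / α) • Hbar)
        = (((b:ℝ)⁻¹ * ((∑ i ∈ s, chi i x) * m)) * (1 + ρ / α * lam)) • E1 := by
      simp only [Ht, hsum, smul_smul]
      rw [Matrix.smul_mul, hE, smul_smul]
    rw [this, smul_smul]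
    congr 1
    rw [ht]
    ring
  -- entry computation
  have hentry : ∀ x : Fin n → Bool,
      ((J x)ᵀ * J x) 0 0 = (1 - t * ∑ i ∈ s, chi i x) ^ 2 := by
    intro x
    rw [hJ x]
    generalize (t * ∑ i ∈ s, chi i x) = a
    simp only [E1, Matrix.mul_apply, Matrix.transpose_apply, Matrix.sub_apply, Matrix.one_apply,
      Matrix.smul_apply, Matrix.single, Matrix.of_apply, smul_eq_mul]
    rw [Finset.sum_eq_single 0]
    · simp; ring
    · intro k _ hk
      simp [hk, Ne.symm hk]
    · simp
  -- reduce to scalar expectation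
  have hLHS : (∑ x : Fin n → Bool,
        (∏ i, if x i then (b : ℝ) / n else 1 - (b : ℝ) / n) • ((J x)ᵀ * J x)) 0 0
      = ∑ x : Fin n → Bool, Pw p x * (1 - t * ∑ i ∈ s, chi i x) ^ 2 := by
    rw [Matrix.sum_apply]
    refine Finset.sum_congr rfl fun x _ => ?_
    rw [Matrix.smul_apply, smul_eq_mul, hentry x]
    rfl
  rw [hLHS, key p t s]
  have hcard : (s.card : ℝ) = (σ : ℝ) := by
    rw [hs, card_filter_lt hσn]
  rw [hcard]
  -- algebra
  have hm0 : 0 < m := by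
    simp only [m]; positivity
  have hμ0 : (0:ℝ) < 1 + ρ / α * lam := by positivity
  have ht0 : 0 < t := by rw [ht]; positivity
  have hp0 : 0 < p := by rw [hp]; positivity
  have hc0 : 0 < t * (σ:ℝ) * p := by positivity
  have h1 : (1 - 2 * t * (σ:ℝ) * p + t ^ 2 * ((σ:ℝ) * p + (σ:ℝ) * ((σ:ℝ) - 1) * p ^ 2) ≤ 1)
      ↔ t ^ 2 * ((σ:ℝ) * p + (σ:ℝ) * ((σ:ℝ) - 1) * p ^ 2) ≤ 2 * t * (σ:ℝ) * p := by
    constructor <;> intro h <;> linarith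
  rw [h1,
    show t ^ 2 * ((σ:ℝ) * p + (σ:ℝ) * ((σ:ℝ) - 1) * p ^ 2)
        = (t * (1 + ((σ:ℝ) - 1) * p)) * (t * (σ:ℝ) * p) from by ring,
    show 2 * t * (σ:ℝ) * p = 2 * (t * (σ:ℝ) * p) from by ring,
    mul_le_mul_iff_of_pos_right hc0,
    ← mul_le_mul_iff_of_pos_right hσ0,
    show t * (1 + ((σ:ℝ) - 1) * p) * (σ:ℝ)
        = η * lam * (1 + ρ / α * lam) * ((σ:ℝ) + (n:ℝ) / b - 1) from by
      rw [ht, hp]; simp only [m]; field_simp; ring]
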